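/- For every k ≥ n the operators E_k^* = Σ_{i=1}^n x_i (∂/∂y_i)^k and F_k^* = Σ_{i=1}^n y_i (∂/∂x_i)^k vanish identically on the space of diagonal harmonics: E_k^*(f) = 0 and F_k^*(f) = 0 for every f ∈ DH_n. -/

import Mathlib

open MvPolynomial

/-- The polynomial ring `R = ℂ[x_1,…,x_n,y_1,…,y_n]`: the variable `x_i` is
`X (Sum.inl i)` and `y_i` is `X (Sum.inr i)`. -/
abbrev Rn (n : ℕ) : Type := MvPolynomial (Fin n ⊕ Fin n) ℂ

/-- The diagonal action of a permutation `σ ∈ S_n` on `R`, permuting the `x_i` and the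
`y_i` simultaneously. -/
noncomputable def permR (n : ℕ) (σ : Equiv.Perm (Fin n)) : Rn n →ₐ[ℂ] Rn n :=
  MvPolynomial.rename (Sum.map σ σ)

/-- A polynomial is symmetric if it is fixed by the diagonal `S_n`-action. -/
def IsSymP {n : ℕ} (f : Rn n) : Prop := ∀ σ : Equiv.Perm (Fin n), permR n σ f = f

/-- A polynomial is antisymmetric if every permutation acts on it by its sign. -/
def IsAntiSymP {n : ℕ} (f : Rn n) : Prop :=
  ∀ σ : Equiv.Perm (Fin n), permR n σ f = (Equiv.Perm.sign σ : ℤ) • f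

/-- The ideal `I_+` generated by all symmetric polynomials with zero constant term. -/
noncomputable def Iplus (n : ℕ) : Ideal (Rn n) :=
  Ideal.span {f | IsSymP f ∧ constantCoeff f = 0}

/-- The ideal `J` generated by all antisymmetric polynomials. -/
noncomputable def Jid (n : ℕ) : Ideal (Rn n) :=
  Ideal.span {f | IsAntiSymP f}

/-- The maximal homogeneous ideal `m = (x_1,…,x_n,y_1,…,y_n)`. -/
noncomputable def mId (n : ℕ) : Ideal (Rn n) :=
  Ideal.span (Set.range X)

/-- The operator `E_k = Σ_i y_i^k ∂/∂x_i`. -/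
noncomputable def Eop (n k : ℕ) : Rn n →ₗ[ℂ] Rn n :=
  ∑ i : Fin n,
    (LinearMap.mulLeft ℂ ((X (Sum.inr i) : Rn n) ^ k)) ∘ₗ (pderiv (Sum.inl i)).toLinearMap

/-- The operator `F_k = Σ_i x_i^k ∂/∂y_i`. -/
noncomputable def Fop (n k : ℕ) : Rn n →ₗ[ℂ] Rn n :=
  ∑ i : Fin n,
    (LinearMap.mulLeft ℂ ((X (Sum.inl i) : Rn n) ^ k)) ∘ₗ (pderiv (Sum.inr i)).toLinearMap

/-- The operator `E_k^* = Σ_i x_i (∂/∂y_i)^k`. -/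
noncomputable def Estar (n k : ℕ) : Rn n →ₗ[ℂ] Rn n :=
  ∑ i : Fin n,
    (LinearMap.mulLeft ℂ ((X (Sum.inl i) : Rn n))) ∘ₗ ((pderiv (Sum.inr i)).toLinearMap ^ k)

/-- The operator `F_k^* = Σ_i y_i (∂/∂x_i)^k`. -/
noncomputable def Fstar (n k : ℕ) : Rn n →ₗ[ℂ] Rn n :=
  ∑ i : Fin n,
    (LinearMap.mulLeft ℂ ((X (Sum.inr i) : Rn n))) ∘ₗ ((pderiv (Sum.inl i)).toLinearMap ^ k)

/-- The constant-coefficient differential operator `g(∂/∂x_1,…,∂/∂x_n,∂/∂y_1,…,∂/∂y_n)`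
obtained by substituting partial derivatives for the variables of `g`. -/
noncomputable def applyDeriv (n : ℕ) (g : Rn n) : Module.End ℂ (Rn n) :=
  ∑ s ∈ g.support, (MvPolynomial.coeff s g) •
    (((Finset.univ : Finset (Fin n ⊕ Fin n)).toList).map
      (fun j => ((pderiv j).toLinearMap : Module.End ℂ (Rn n)) ^ (s j))).prod

/-- The space of diagonal harmonics `DH_n`. -/
def DH (n : ℕ) : Set (Rn n) :=
  {f | ∀ g : Rn n, IsSymP g → constantCoeff g = 0 → applyDeriv n g f = 0}

/-- The Vandermonde determinant `Δ(x) = ∏_{i<j}(x_i − x_j)`. -/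
noncomputable def Dx (n : ℕ) : Rn n :=
  ∏ p ∈ Finset.univ.filter (fun p : Fin n × Fin n => p.1 < p.2),
    (X (Sum.inl p.1) - X (Sum.inl p.2))

/-- The Vandermonde determinant `Δ(y) = ∏_{i<j}(y_i − y_j)`. -/
noncomputable def Dy (n : ℕ) : Rn n :=
  ∏ p ∈ Finset.univ.filter (fun p : Fin n × Fin n => p.1 < p.2),
    (X (Sum.inr p.1) - X (Sum.inr p.2))

/-- Evaluation of a polynomial `φ` in `m` commuting variables on a family of `m`
pairwise commuting endomorphisms. -/
noncomputable def evalEndo {V : Type*} [AddCommMonoid V] [Module ℂ V] {m : ℕ}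
    (T : Fin m → Module.End ℂ V) (φ : MvPolynomial (Fin m) ℂ) : Module.End ℂ V :=
  ∑ s ∈ φ.support, (MvPolynomial.coeff s φ) •
    (((List.finRange m).map (fun j => (T j) ^ (s j))).prod)

/-- Weights recording the bigrading of `R`: an `x`-variable has bidegree `(1,0)` and a
`y`-variable has bidegree `(0,1)`. -/
def wtB (n : ℕ) : Fin n ⊕ Fin n → ℕ × ℕ :=
  Sum.elim (fun _ => ((1 : ℕ), (0 : ℕ))) (fun _ => ((0 : ℕ), (1 : ℕ)))

/-- Bihomogeneity of bidegree `d = (d_x, d_y)` with respect to the bigrading of `R`. -/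
def BiHom (n : ℕ) (f : Rn n) (d : ℕ × ℕ) : Prop :=
  MvPolynomial.IsWeightedHomogeneous (wtB n) f d

/-!
The variable `y_r` is a root of `∏ᵢ (T - yᵢ)`, whose coefficients below the top one are
symmetric without constant term, so `y_r ^ n` lies in the ideal `I₊` they generate. Every
`g ∈ I₊` gives `g(∂) f = 0` for `f ∈ DH_n`, because `g ↦ g(∂)` is multiplicative; hence
`(∂/∂y_r)^k f = 0` for all `k ≥ n`, and likewise for the `x`-variables.
-/

theorem MvPolynomial.pderiv_pderiv_comm {σ R : Type*} [CommSemiring R] (i j : σ)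
    (p : MvPolynomial σ R) : pderiv i (pderiv j p) = pderiv j (pderiv i p) := by
  obtain rfl | h := eq_or_ne i j
  · rfl
  induction p using MvPolynomial.induction_on' with
  | monomial s a =>
      simp only [pderiv_monomial, Finsupp.tsub_apply, Finsupp.single_eq_of_ne' h,
        Finsupp.single_eq_of_ne' (Ne.symm h), tsub_zero, tsub_right_comm]
      ring_nf
  | add p q hp hq => simp only [map_add, hp, hq]

theorem Polynomial.Monic.pow_natDegree_mem {A : Type*} [CommRing A] {p : Polynomial A}
    (hp : p.Monic) {x : A} (hx : p.IsRoot x) {I : Ideal A}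
    (hI : ∀ j < p.natDegree, p.coeff j ∈ I) : x ^ p.natDegree ∈ I := by
  have hroot : x ^ p.natDegree + ∑ j ∈ Finset.range p.natDegree, p.coeff j * x ^ j = 0 := by
    simpa [Polynomial.eval_finsetSum] using (congrArg (Polynomial.eval x) hp.as_sum).symm.trans hx
  rw [eq_neg_of_add_eq_zero_left hroot]
  exact I.neg_mem <| I.sum_mem fun j hj => I.mul_mem_right _ (hI j (Finset.mem_range.mp hj))

open scoped IsMulCommutative

-- `g ↦ g(∂)` is `aeval partialOp` into this commutative subalgebra of `Module.End ℂ R`.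
noncomputable abbrev diffOps (n : ℕ) : Subalgebra ℂ (Module.End ℂ (Rn n)) :=
  Algebra.adjoin ℂ (Set.range fun j => (pderiv j).toLinearMap)

instance (n : ℕ) : IsMulCommutative (diffOps n) :=
  Algebra.isMulCommutative_adjoin ℂ <| by
    rintro _ ⟨i, rfl⟩ _ ⟨j, rfl⟩
    exact LinearMap.ext (pderiv_pderiv_comm i j)

noncomputable def partialOp (n : ℕ) (j : Fin n ⊕ Fin n) : diffOps n :=
  ⟨(pderiv j).toLinearMap, Algebra.subset_adjoin ⟨j, rfl⟩⟩

theorem applyDeriv_eq_aeval (n : ℕ) (g : Rn n) :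
    applyDeriv n g = aeval (partialOp n) g := by
  rw [aeval_def, eval₂_eq', ← Subalgebra.coe_val, map_sum]
  refine Finset.sum_congr rfl fun s _ => ?_
  rw [map_mul, Subalgebra.coe_val, Subalgebra.coe_algebraMap, ← Algebra.smul_def,
    ← Finset.prod_map_toList, Submonoid.coe_list_prod, List.map_map]
  rfl

theorem aeval_partialOp_apply_eq_zero {n : ℕ} {f : Rn n} (hf : f ∈ DH n) {g : Rn n}
    (hg : g ∈ Iplus n) : (aeval (partialOp n) g : Module.End ℂ (Rn n)) f = 0 := by
  induction hg using Submodule.span_induction with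
  | mem g hg => rw [← applyDeriv_eq_aeval]; exact hf g hg.1 hg.2
  | zero => simp
  | add g h _ _ hg hh => simp [hg, hh]
  | smul a g _ hg => simp [hg]

theorem X_pow_mem_Iplus {n : ℕ} (ι : Fin n → Fin n ⊕ Fin n)
    (hι : ∀ (σ : Equiv.Perm (Fin n)) (i : Fin n), Sum.map σ σ (ι i) = ι (σ i)) (r : Fin n) :
    (X (ι r) : Rn n) ^ n ∈ Iplus n := by
  set P : Polynomial (Rn n) := ∏ i, (Polynomial.X - Polynomial.C (X (ι i)))
  have hP : P.Monic := Polynomial.monic_prod_of_monic _ _ fun i _ => Polynomial.monic_X_sub_C _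
  have hdeg : P.natDegree = n := by simp [P]
  have hroot : P.IsRoot (X (ι r)) := by
    simp [P, Polynomial.eval_prod, Finset.prod_eq_zero_iff, sub_eq_zero]
  have hsym (σ : Equiv.Perm (Fin n)) : P.map (permR n σ : Rn n →+* Rn n) = P := by
    simp only [P, Polynomial.map_prod, Polynomial.map_sub, Polynomial.map_X, Polynomial.map_C,
      RingHom.coe_coe, permR, rename_X, hι]
    exact Equiv.prod_comp σ fun i => Polynomial.X - Polynomial.C (X (ι i))
  have hconst : P.map (constantCoeff : Rn n →+* ℂ) = Polynomial.X ^ n := by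
    simp [P, Polynomial.map_prod]
  suffices hcoeff : ∀ j < P.natDegree, P.coeff j ∈ Iplus n by
    simpa only [hdeg] using hP.pow_natDegree_mem hroot hcoeff
  refine fun j hj => Ideal.subset_span ⟨fun σ => ?_, ?_⟩
  · simpa using congrArg (Polynomial.coeff · j) (hsym σ)
  · simpa [Polynomial.coeff_X_pow, hdeg ▸ hj.ne] using congrArg (Polynomial.coeff · j) hconst

theorem pderiv_pow_apply_eq_zero_of_mem_DH {n k : ℕ} (hk : n ≤ k) {f : Rn n} (hf : f ∈ DH n)
    (ι : Fin n → Fin n ⊕ Fin n)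
    (hι : ∀ (σ : Equiv.Perm (Fin n)) (i : Fin n), Sum.map σ σ (ι i) = ι (σ i)) (r : Fin n) :
    ((pderiv (ι r)).toLinearMap ^ k) f = 0 := by
  have hn : ((pderiv (ι r)).toLinearMap ^ n) f = 0 := by
    simpa [partialOp] using aeval_partialOp_apply_eq_zero hf (X_pow_mem_Iplus ι hι r)
  rw [← Nat.sub_add_cancel hk, pow_add, Module.End.mul_apply, hn, map_zero]

theorem stmt10_general (n : ℕ) :
    ∀ k : ℕ, n ≤ k → ∀ f ∈ DH n, Estar n k f = 0 ∧ Fstar n k f = 0 := by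
  intro k hk f hf
  constructor
  · simp [Estar, pderiv_pow_apply_eq_zero_of_mem_DH hk hf Sum.inr fun _ _ => rfl]
  · simp [Fstar, pderiv_pow_apply_eq_zero_of_mem_DH hk hf Sum.inl fun _ _ => rfl]

theorem stmt10 (n : ℕ) (hn : 1 ≤ n) :
    ∀ k : ℕ, n ≤ k → ∀ f ∈ DH n, Estar n k f = 0 ∧ Fstar n k f = 0 :=
  stmt10_general n
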